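/- arXiv:1906.05265 — 3 statements merged into one kernel-verified Lean document; each statement's English description precedes it below -/
import Mathlib

section
/- The set of transitive subgroups of S₄ is exactly (up to conjugacy) {S₄, A₄, D₈, V₄, Z₄}, where D₈ = ⟨(1 2 3 4),(1 3)⟩, V₄ = {id,(12)(34),(13)(24),(14)(23)} and Z₄ = ⟨(1 2 3 4)⟩; in particular every transitive subgroup of S₄ has order divisible by 4. -/
open Equiv Subgroup Pointwise

private abbrev pa : Perm (Fin 4) := Equiv.swap (0 : Fin 4) 1 * Equiv.swap (2 : Fin 4) 3
private abbrev pb : Perm (Fin 4) := Equiv.swap (0 : Fin 4) 2 * Equiv.swap (1 : Fin 4) 3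
private abbrev pr : Perm (Fin 4) := finRotate 4
private abbrev ps : Perm (Fin 4) := Equiv.swap (0 : Fin 4) 2

private def F8 : Finset (Perm (Fin 4)) :=
  {1, pr, pr^2, pr^3, ps, pr*ps, pr^2*ps, pr^3*ps}
private def F4 : Finset (Perm (Fin 4)) := {1, pa, pb, pa*pb}

private lemma F8mul : ∀ p q : Perm (Fin 4), p ∈ F8 → q ∈ F8 → p * q ∈ F8 := by decide
private lemma F8inv : ∀ p : Perm (Fin 4), p ∈ F8 → p⁻¹ ∈ F8 := by decide
private lemma F4mul : ∀ p q : Perm (Fin 4), p ∈ F4 → q ∈ F4 → p * q ∈ F4 := by decide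
private lemma F4inv : ∀ p : Perm (Fin 4), p ∈ F4 → p⁻¹ ∈ F4 := by decide

private def D8sub : Subgroup (Perm (Fin 4)) where
  carrier := {g | g ∈ F8}
  one_mem' := by decide
  mul_mem' := fun hp hq => F8mul _ _ hp hq
  inv_mem' := fun hp => F8inv _ hp

private def V4sub : Subgroup (Perm (Fin 4)) where
  carrier := {g | g ∈ F4}
  one_mem' := by decide
  mul_mem' := fun hp hq => F4mul _ _ hp hq
  inv_mem' := fun hp => F4inv _ hp

private instance : DecidablePred (· ∈ D8sub) := fun x =>
  decidable_of_iff (x ∈ F8) Iff.rfl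

private instance : DecidablePred (· ∈ V4sub) := fun x =>
  decidable_of_iff (x ∈ F4) Iff.rfl

private lemma card_D8sub : Nat.card D8sub = 8 := by
  rw [Nat.card_eq_fintype_card]
  exact (Fintype.card_of_subtype F8 (fun x => Iff.rfl)).trans (by decide)

private lemma card_V4sub : Nat.card V4sub = 4 := by
  rw [Nat.card_eq_fintype_card]
  exact (Fintype.card_of_subtype F4 (fun x => Iff.rfl)).trans (by decide)

private lemma closure_D8 : closure {pr, ps} = D8sub := by
  apply le_antisymm
  · rw [closure_le]
    intro g hg
    rcases hg with rfl | hg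
    · exact (show pr ∈ F8 by decide)
    · rw [Set.mem_singleton_iff] at hg; subst hg
      exact (show ps ∈ F8 by decide)
  · intro g hg
    have hr : pr ∈ closure {pr, ps} := subset_closure (Set.mem_insert _ _)
    have hs : ps ∈ closure {pr, ps} := subset_closure (by simp)
    have hg' : g ∈ F8 := hg
    fin_cases hg'
    · exact one_mem _
    · exact hr
    · exact pow_mem hr 2
    · exact pow_mem hr 3
    · exact hs
    · exact mul_mem hr hs
    · exact mul_mem (pow_mem hr 2) hs
    · exact mul_mem (pow_mem hr 3) hs

private lemma closure_V4 : closure {pa, pb} = V4sub := by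
  apply le_antisymm
  · rw [closure_le]
    intro g hg
    rcases hg with rfl | hg
    · exact (show pa ∈ F4 by decide)
    · rw [Set.mem_singleton_iff] at hg; subst hg
      exact (show pb ∈ F4 by decide)
  · intro g hg
    have ha : pa ∈ closure {pa, pb} := subset_closure (Set.mem_insert _ _)
    have hb : pb ∈ closure {pa, pb} := subset_closure (by simp)
    have hg' : g ∈ F4 := hg
    fin_cases hg'
    · exact one_mem _
    · exact ha
    · exact hb
    · exact mul_mem ha hb

/-- powers of the rotation act transitively -/
private lemma rot_trans : ∀ i j : Fin 4, ∃ k : Fin 4, (pr ^ (k : ℕ)) i = j := by decide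

private lemma trans_closure_of_mem {S : Set (Perm (Fin 4))} (h : pr ∈ S) :
    ∀ i j : Fin 4, ∃ g ∈ closure S, g i = j := by
  intro i j
  obtain ⟨k, hk⟩ := rot_trans i j
  exact ⟨pr ^ (k : ℕ), pow_mem (subset_closure h) _, hk⟩

private lemma V4_trans : ∀ i j : Fin 4, ∃ g ∈ closure {pa, pb}, g i = j := by
  intro i j
  have h4 : (1 : Perm (Fin 4)) i = j ∨ pa i = j ∨ pb i = j ∨ (pa * pb) i = j := by
    revert i j; decide
  have ha : pa ∈ closure {pa, pb} := subset_closure (Set.mem_insert _ _)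
  have hb : pb ∈ closure {pa, pb} := subset_closure (by simp)
  rcases h4 with h | h | h | h
  · exact ⟨1, one_mem _, h⟩
  · exact ⟨pa, ha, h⟩
  · exact ⟨pb, hb, h⟩
  · exact ⟨pa * pb, mul_mem ha hb, h⟩

private lemma V4_le_alternating : closure {pa, pb} ≤ alternatingGroup (Fin 4) := by
  rw [closure_le]
  intro g hg
  rcases hg with rfl | hg
  · simp only [SetLike.mem_coe, Equiv.Perm.mem_alternatingGroup]; decide
  · rw [Set.mem_singleton_iff] at hg; subst hg
    simp only [SetLike.mem_coe, Equiv.Perm.mem_alternatingGroup]; decide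

private lemma alt_trans : ∀ i j : Fin 4, ∃ g ∈ alternatingGroup (Fin 4), g i = j := by
  intro i j
  obtain ⟨g, hg, hgij⟩ := V4_trans i j
  exact ⟨g, V4_le_alternating hg, hgij⟩

private lemma conj4 : ∀ c : Perm (Fin 4), c ^ 2 ≠ 1 → (∀ i, c i ≠ i) →
    ∃ x, x * c * x⁻¹ = finRotate 4 := by decide

private lemma klein4 : ∀ c : Perm (Fin 4), c ^ 2 = 1 → c ≠ 1 → (∀ i, c i ≠ i) →
    c = pa ∨ c = pb ∨ c = pa * pb := by decide

private lemma orbstab (G : Subgroup (Perm (Fin 4))) (h : ∀ i j : Fin 4, ∃ g ∈ G, g i = j)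
    (i : Fin 4) : Nat.card G = 4 * Nat.card (MulAction.stabilizer G i) := by
  have horb : MulAction.orbit G i = Set.univ := by
    ext j
    simp only [Set.mem_univ, iff_true, MulAction.mem_orbit_iff]
    obtain ⟨g, hg, hgj⟩ := h i j
    exact ⟨⟨g, hg⟩, hgj⟩
  have e1 : Nat.card (G ⧸ MulAction.stabilizer G i) = 4 := by
    rw [← Nat.card_congr (MulAction.orbitEquivQuotientStabilizer G i), horb,
      Nat.card_eq_fintype_card]
    exact (Fintype.card_congr (Equiv.Set.univ _)).trans (by simp)
  rw [Subgroup.card_eq_card_quotient_mul_card_subgroup (MulAction.stabilizer G i), e1]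

private lemma card_perm4 : Nat.card (Perm (Fin 4)) = 24 := by
  rw [Nat.card_eq_fintype_card, Fintype.card_perm]
  decide

private lemma map_conj_one (G : Subgroup (Perm (Fin 4))) :
    Subgroup.map (MulAut.conj (1 : Perm (Fin 4))).toMonoidHom G = G := by
  have : (MulAut.conj (1 : Perm (Fin 4))).toMonoidHom = MonoidHom.id _ := by
    ext g; simp
  rw [this]
  exact Subgroup.map_id G

/-- The transitive subgroups of `S₄` are exactly, up to conjugacy,
`S₄`, `A₄`, `D₈ = ⟨(0123),(02)⟩`, `V₄ = ⟨(01)(23),(02)(13)⟩` and `Z₄ = ⟨(0123)⟩`;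
in particular every transitive subgroup of `S₄` has order divisible by `4`. -/
theorem stmt_7 :
    ∀ G : Subgroup (Equiv.Perm (Fin 4)),
      ((∀ i j : Fin 4, ∃ g ∈ G, g i = j) ↔
        ∃ x : Equiv.Perm (Fin 4),
          Subgroup.map (MulAut.conj x).toMonoidHom G ∈
            ({⊤, alternatingGroup (Fin 4),
              Subgroup.closure {finRotate 4, Equiv.swap (0 : Fin 4) 2},
              Subgroup.closure {Equiv.swap (0 : Fin 4) 1 * Equiv.swap (2 : Fin 4) 3,
                Equiv.swap (0 : Fin 4) 2 * Equiv.swap (1 : Fin 4) 3},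
              Subgroup.closure {finRotate 4}} : Set (Subgroup (Equiv.Perm (Fin 4))))) ∧
      ((∀ i j : Fin 4, ∃ g ∈ G, g i = j) → 4 ∣ Nat.card G) := by
  intro G
  have hdvd : (∀ i j : Fin 4, ∃ g ∈ G, g i = j) → 4 ∣ Nat.card G := by
    intro h
    rw [orbstab G h 0]
    exact Dvd.intro _ rfl
  refine ⟨⟨?_, ?_⟩, hdvd⟩
  · -- forward: transitive → conjugate to one of the five
    intro h
    have h4 := hdvd h
    have h24 : Nat.card G ∣ 24 := card_perm4 ▸ Subgroup.card_subgroup_dvd_card G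
    have hle : Nat.card G ≤ 24 := Nat.le_of_dvd (by norm_num) h24
    have hcases : Nat.card G = 4 ∨ Nat.card G = 8 ∨ Nat.card G = 12 ∨ Nat.card G = 24 := by
      interval_cases h : (Nat.card G) <;> omega
    rcases hcases with hc | hc | hc | hc
    · -- order 4
      have hstab : ∀ i : Fin 4, MulAction.stabilizer G i = ⊥ := by
        intro i
        rw [← Subgroup.card_eq_one]
        have := orbstab G h i
        omega
      have hfree : ∀ g ∈ G, g ≠ 1 → ∀ i : Fin 4, g i ≠ i := by
        intro g hg hg1 i hi
        have hmem : (⟨g, hg⟩ : G) ∈ MulAction.stabilizer G i := hi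
        rw [hstab i, Subgroup.mem_bot] at hmem
        exact hg1 (congrArg Subtype.val hmem)
      by_cases hcyc : ∃ c ∈ G, c ^ 2 ≠ 1
      · -- cyclic of order 4
        obtain ⟨c, hcG, hc2⟩ := hcyc
        have hc1 : c ≠ 1 := by rintro rfl; exact hc2 (one_pow 2)
        have hcfree : ∀ i, c i ≠ i := hfree c hcG hc1
        obtain ⟨x, hx⟩ := conj4 c hc2 hcfree
        -- orderOf c = 4
        have hc4 : c ^ 4 = 1 := by
          have h1 : orderOf (⟨c, hcG⟩ : G) ∣ Nat.card G :=
            _root_.orderOf_dvd_natCard (⟨c, hcG⟩ : G)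
          rw [hc] at h1
          have h2 : (⟨c, hcG⟩ : G) ^ 4 = 1 := orderOf_dvd_iff_pow_eq_one.mp h1
          exact congrArg Subtype.val h2
        have hord : orderOf c = 4 := by
          have hdvd4 : orderOf c ∣ 4 := orderOf_dvd_iff_pow_eq_one.mpr hc4
          have hnd : ¬ orderOf c ∣ 2 := fun hd => hc2 (orderOf_dvd_iff_pow_eq_one.mp hd)
          have hub : orderOf c ≤ 4 := Nat.le_of_dvd (by norm_num) hdvd4
          interval_cases h : (orderOf c) <;> omega
        have hGc : G = closure {c} := by
          refine (Subgroup.eq_of_le_of_card_ge ?_ ?_).symm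
          · rw [closure_le]; simpa using hcG
          · rw [← Subgroup.zpowers_eq_closure, Nat.card_zpowers, hord, hc]
        refine ⟨x, ?_⟩
        have : Subgroup.map (MulAut.conj x).toMonoidHom G = closure {finRotate 4} := by
          rw [hGc, MonoidHom.map_closure, Set.image_singleton]
          congr 1
          rw [Set.singleton_eq_singleton_iff]
          simpa [MulAut.conj_apply] using hx
        rw [this]
        simp only [Set.mem_insert_iff, Set.mem_singleton_iff]; tauto
      · -- Klein four group
        push_neg at hcyc
        have hGV : G = V4sub := by
          apply Subgroup.eq_of_le_of_card_ge ?_ (by rw [card_V4sub, hc])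
          intro g hg
          by_cases hg1 : g = 1
          · subst hg1; exact one_mem _
          · have := klein4 g (hcyc g hg) hg1 (hfree g hg hg1)
            rcases this with rfl | rfl | rfl
            · show pa ∈ F4; decide
            · show pb ∈ F4; decide
            · show pa * pb ∈ F4; decide
        refine ⟨1, ?_⟩
        rw [map_conj_one, hGV, ← closure_V4]
        simp only [Set.mem_insert_iff, Set.mem_singleton_iff]; tauto
    · -- order 8 : Sylow
      haveI : Fact (Nat.Prime 2) := ⟨Nat.prime_two⟩
      have hfact : (Nat.card (Perm (Fin 4))).factorization 2 = 3 := by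
        rw [card_perm4]
        have h24 : (24 : ℕ) = 2 ^ 3 * 3 := by norm_num
        rw [h24, Nat.factorization_mul (by norm_num) (by norm_num),
          Nat.Prime.factorization_pow (by norm_num)]
        have h3 : Nat.factorization 3 2 = 0 := Nat.factorization_eq_zero_of_not_dvd (by norm_num)
        simp [h3]
      have hGcard : Nat.card G = 2 ^ (Nat.card (Perm (Fin 4))).factorization 2 := by
        rw [hfact, hc]; norm_num
      have hDcard : Nat.card (closure {pr, ps} : Subgroup (Perm (Fin 4))) =
          2 ^ (Nat.card (Perm (Fin 4))).factorization 2 := by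
        rw [hfact, closure_D8, card_D8sub]; norm_num
      let P : Sylow 2 (Perm (Fin 4)) := Sylow.ofCard G hGcard
      let Q : Sylow 2 (Perm (Fin 4)) := Sylow.ofCard _ hDcard
      obtain ⟨x, hx⟩ := MulAction.exists_smul_eq (Perm (Fin 4)) P Q
      refine ⟨x, ?_⟩
      have : Subgroup.map (MulAut.conj x).toMonoidHom G = closure {pr, ps} := by
        have h1 : ((x • P : Sylow 2 (Perm (Fin 4))) : Subgroup (Perm (Fin 4))) =
            Subgroup.map (MulAut.conj x).toMonoidHom G := rfl
        rw [hx] at h1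
        exact h1.symm
      rw [this]
      simp only [Set.mem_insert_iff, Set.mem_singleton_iff]; tauto
    · -- order 12 : alternating group
      have hidx : G.index = 2 := by
        have := Subgroup.card_mul_index G
        rw [hc, card_perm4] at this
        omega
      have hA : alternatingGroup (Fin 4) ≤ G := by
        rw [← Equiv.Perm.closure_three_cycles_eq_alternating, closure_le]
        intro σ hσ
        have h3 : σ ^ 3 = 1 := by
          rw [← Equiv.Perm.IsThreeCycle.orderOf hσ]
          exact pow_orderOf_eq_one σ
        have : σ = (σ ^ 2) ^ 2 := by
          rw [← pow_mul]
          calc σ = σ ^ 3 * σ := by rw [h3, one_mul]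
          _ = σ ^ 4 := by rw [← pow_succ]
          _ = σ ^ (2 * 2) := by norm_num
        rw [this]
        exact Subgroup.sq_mem_of_index_two hidx _
      have hGA : G = alternatingGroup (Fin 4) := by
        refine (Subgroup.eq_of_le_of_card_ge hA ?_).symm
        have h2 : 2 * Nat.card (alternatingGroup (Fin 4)) = Nat.card (Perm (Fin 4)) := by
          rw [Nat.card_eq_fintype_card, Nat.card_eq_fintype_card]
          exact two_mul_card_alternatingGroup
        rw [hc]
        rw [card_perm4] at h2
        omega
      refine ⟨1, ?_⟩
      rw [map_conj_one, hGA]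
      simp only [Set.mem_insert_iff, Set.mem_singleton_iff]; tauto
    · -- order 24 : top
      have hGT : G = ⊤ := Subgroup.eq_top_of_card_eq G (by rw [hc, card_perm4])
      refine ⟨1, ?_⟩
      rw [map_conj_one, hGT]
      simp only [Set.mem_insert_iff, Set.mem_singleton_iff]; tauto
  · -- backward: conjugate to one of the five → transitive
    rintro ⟨x, hx⟩
    have key : ∀ i j : Fin 4, ∃ g ∈ Subgroup.map (MulAut.conj x).toMonoidHom G, g i = j := by
      simp only [Set.mem_insert_iff, Set.mem_singleton_iff] at hx
      rcases hx with hx | hx | hx | hx | hx <;> rw [hx]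
      · exact fun i j => ⟨Equiv.swap i j, trivial, Equiv.swap_apply_left i j⟩
      · exact alt_trans
      · exact trans_closure_of_mem (Set.mem_insert _ _)
      · exact V4_trans
      · exact trans_closure_of_mem rfl
    intro i j
    obtain ⟨g', hg', hg'ij⟩ := key (x i) (x j)
    obtain ⟨g, hg, rfl⟩ := Subgroup.mem_map.mp hg'
    refine ⟨g, hg, x.injective ?_⟩
    simpa [MulAut.conj_apply, Equiv.Perm.mul_apply] using hg'ij
end

section
/- Let Δ ≥ 2 be an integer. There exists a field k of characteristic zero with algebraically closed k̄ = algebraic closure such that [k̄:k] is infinite and no element of k̄ has an orbit of length exactly Δ under Gal(k̄/k); equivalently, no finite extension of k inside k̄ has degree exactly Δ whose generated extension is obtained from a Galois orbit of size Δ. -/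
/-!
Fix a prime `p > Δ` and, by Zorn's lemma, a subfield `K` of `ℚ̄` maximal among those containing
no `p`-th root of `2`. Then `X ^ p - 2` is irreducible over `K`, so every proper finite extension
of `K` in `ℚ̄`, which by maximality contains a root of it, has degree divisible by `p`; in
particular no degree lies strictly between `1` and `p`. Since `p` is odd, `X ^ (p ^ n) - 2` is
irreducible over `K` for all `n`, so `[ℚ̄ : K]` is infinite.
-/

open Polynomial IntermediateField Module

theorem Rat.pow_ne_two {p : ℕ} (hp : 2 ≤ p) (b : ℚ) : b ^ p ≠ 2 := by
  intro h
  have hval : (p : ℤ) * padicValRat 2 b = 1 := by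
    rw [← padicValRat.pow, h]
    exact_mod_cast padicValRat.self (p := 2) one_lt_two
  have := Int.eq_one_of_mul_eq_one_right (by positivity) hval
  omega

namespace IntermediateField

variable {F E : Type*} [Field F] [Field E] [Algebra F E]

theorem exists_le_maximal_disjoint (S : Set E) (K₀ : IntermediateField F E)
    (h₀ : Disjoint (K₀ : Set E) S) :
    ∃ K, K₀ ≤ K ∧ Maximal (fun L : IntermediateField F E ↦ Disjoint (L : Set E) S) K := by
  refine zorn_le_nonempty₀ _ (fun c hc hchain L hL ↦ ⟨sSup c, ?_, fun _ ↦ le_sSup⟩) K₀ h₀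
  refine Set.disjoint_left.2 fun x hx hxS ↦ ?_
  obtain ⟨L', hL'c, hxL'⟩ := (CompleteLattice.isCompactElement_iff_le_of_directed_sSup_le _ _).1
    (adjoin_simple_isCompactElement x) c ⟨L, hL⟩ hchain.directedOn (adjoin_simple_le_iff.2 hx)
  exact Set.disjoint_left.1 (hc hL'c) (adjoin_simple_le_iff.1 hxL') hxS

end IntermediateField

section RootsOfConstants

variable {K L : Type*} [Field K] [Field L] [Algebra K L] {c : K}

theorem natDegree_minpoly_of_pow_eq {n : ℕ} (hirr : Irreducible (X ^ n - C c)) {y : L}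
    (hy : y ^ n = algebraMap K L c) : (minpoly K y).natDegree = n := by
  have key := minpoly.Irreducible.eq_minpoly (x := y) hirr (by simp [hy])
  rw [← natDegree_X_pow_sub_C (n := n) (r := c), key,
    natDegree_C_mul (leadingCoeff_ne_zero.2 hirr.ne_zero)]

theorem Nat.Prime.dvd_finrank_of_pow_eq {p : ℕ} (hp : p.Prime) (hc : ∀ b : K, b ^ p ≠ c) {y : L}
    (hy : y ^ p = algebraMap K L c) : p ∣ finrank K L := by
  have hdeg := natDegree_minpoly_of_pow_eq (X_pow_sub_C_irreducible_of_prime hp hc) hy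
  have hint : IsIntegral K y := by
    by_contra h
    rw [minpoly.eq_zero h, natDegree_zero] at hdeg
    exact hp.ne_zero hdeg.symm
  exact hdeg ▸ minpoly.degree_dvd hint

theorem not_finite_of_forall_pow_ne [IsAlgClosed L] {p : ℕ} (hp : p.Prime) (hp2 : p ≠ 2)
    (hc : ∀ b : K, b ^ p ≠ c) : ¬ Module.Finite K L := by
  intro _
  obtain ⟨y, hy⟩ :=
    IsAlgClosed.exists_pow_nat_eq (algebraMap K L c) (pow_pos hp.pos (finrank K L))
  have hdeg := natDegree_minpoly_of_pow_eq (X_pow_sub_C_irreducible_of_prime_pow hp hp2 _ hc) hy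
  exact (Nat.lt_pow_self hp.one_lt).not_ge (hdeg ▸ minpoly.natDegree_le y)

end RootsOfConstants

/-- For every `Δ ≥ 2` there is a field `k` of characteristic zero (realized as an
intermediate field of `ℚ ⊆ AlgebraicClosure ℚ`, so that `AlgebraicClosure ℚ` is an
algebraic closure of `k`) such that `[k̄:k]` is infinite and no element `β` of the
algebraic closure satisfies `[k(β):k] = Δ`, i.e., no Galois orbit has size exactly `Δ`. -/
theorem stmt_8 (Δ : ℕ) (hΔ : 2 ≤ Δ) :
    ∃ k : IntermediateField ℚ (AlgebraicClosure ℚ),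
      ¬ Module.Finite k (AlgebraicClosure ℚ) ∧
      ∀ β : AlgebraicClosure ℚ,
        Module.finrank k
          (IntermediateField.adjoin k {β} : IntermediateField k (AlgebraicClosure ℚ)) ≠ Δ := by
  obtain ⟨p, hpΔ, hp⟩ := Nat.exists_infinite_primes (Δ + 1)
  have hbot : Disjoint ((⊥ : IntermediateField ℚ (AlgebraicClosure ℚ)) : Set (AlgebraicClosure ℚ))
      {b | b ^ p = 2} := by
    refine Set.disjoint_left.2 fun x hx hx2 ↦ ?_
    obtain ⟨q, rfl⟩ := mem_bot.1 hx
    exact Rat.pow_ne_two (p := p) (by omega) q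
      ((algebraMap ℚ (AlgebraicClosure ℚ)).injective (by simpa using hx2))
  obtain ⟨K, -, hKdisj, hKmax⟩ := IntermediateField.exists_le_maximal_disjoint _ ⊥ hbot
  have hK : ∀ b : K, b ^ p ≠ 2 := fun b hb ↦ Set.disjoint_left.1 hKdisj b.2 <| by
    simpa only [Set.mem_ofPred_eq, map_pow, map_ofNat, coe_val] using congrArg K.val hb
  refine ⟨K, not_finite_of_forall_pow_ne hp (by omega) hK, fun β hβ ↦ ?_⟩
  have hβK : β ∉ K := fun h ↦ by
    rw [adjoin_simple_eq_bot_iff.2 (mem_bot.2 ⟨⟨β, h⟩, rfl⟩ : β ∈ (⊥ : IntermediateField K _)),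
      IntermediateField.finrank_bot] at hβ
    omega
  obtain ⟨b, hbβ, hb⟩ : ∃ b ∈ K⟮β⟯, b ^ p = 2 := by
    by_contra! h
    refine hβK (hKmax (y := restrictScalars ℚ K⟮β⟯) ?_ ?_ (mem_adjoin_simple_self K β))
    · exact Set.disjoint_left.2 h
    · exact fun c hc ↦ (mem_restrictScalars ℚ).2 (K⟮β⟯.algebraMap_mem ⟨c, hc⟩)
  have hdvd := hp.dvd_finrank_of_pow_eq hK (y := (⟨b, hbβ⟩ : K⟮β⟯)) (Subtype.ext (by simpa))
  rw [hβ] at hdvd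
  exact (Nat.le_of_dvd (by omega) hdvd).not_gt hpΔ
end

section
/- Let L/k be a finite Galois extension, and let p₁,…,p₄ ∈ ℙ²(L) be four points no three of which are collinear, and q₁,…,q₄ ∈ ℙ²(L) four points no three collinear. Assume for every g ∈ Gal(L/k) there exists σ ∈ S₄ with g(pᵢ) = p_{σ(i)} and g(qᵢ) = q_{σ(i)} for all i. Then there exists a projective linear transformation A ∈ PGL₃(k) (defined over k) with A·pᵢ = qᵢ for i = 1,…,4. -/
/-!
Over `L`, one frame of `ℙ²` can be sent to any other one by an invertible matrix `A`, and `A`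
is unique up to a scalar, since a map having every point of a frame as an eigenvector is a
scalar. Applying `g ∈ Gal(L/k)` to the entries of `A` gives a matrix sending
`g pᵢ = p_{σ i}` to `g qᵢ = q_{σ i}`, so `g A = e_g A`. Dividing `A` by one of its nonzero
entries then makes every entry Galois invariant, hence an element of `k`.
-/

open Matrix

namespace Module.Basis

variable {K V W ι : Type*} [Field K] [AddCommGroup V] [Module K V] [AddCommGroup W] [Module K W]

theorem repr_ne_zero_of_linearIndependent_update [DecidableEq ι] (b : Basis ι K V) {x : V}
    {i : ι} (h : LinearIndependent K (Function.update b i x)) : b.repr x i ≠ 0 := by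
  intro hxi
  have hx : x ∈ Submodule.span K (b '' {i}ᶜ) := by
    rw [mem_span_image]
    rintro j hj (rfl : j = i)
    exact Finsupp.mem_support_iff.mp hj hxi
  have himage : Function.update b i x '' {i}ᶜ = b '' {i}ᶜ :=
    Set.image_congr fun j hj => Function.update_of_ne hj _ _
  have := h.notMem_span_image (s := {i}ᶜ) (x := i) (by simp)
  rw [himage, Function.update_self] at this
  exact this hx

variable [Fintype ι]

theorem exists_linearEquiv_apply_eq_smul_of_repr_ne_zero (b : Basis ι K V) (c : Basis ι K W)
    {x : V} {y : W} (hx : ∀ i, b.repr x i ≠ 0) (hy : ∀ i, c.repr y i ≠ 0) :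
    ∃ f : V ≃ₗ[K] W, (∀ i, ∃ t : Kˣ, f (b i) = (t : K) • c i) ∧ f x = y := by
  let u i := Units.mk0 _ (hx i)
  let v i := Units.mk0 _ (hy i)
  -- in the rescaled bases, `x` and `y` are the sums of the basis vectors
  let f := (b.unitsSMul u).equiv (c.unitsSMul v) (Equiv.refl ι)
  have hf : ∀ i, f (b i) = ((b.repr x i)⁻¹ * c.repr y i) • c i := fun i => by
    have hb : b i = (b.repr x i)⁻¹ • b.unitsSMul u i := by
      rw [unitsSMul_apply, Units.smul_def]
      exact (inv_smul_smul₀ (hx i) _).symm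
    rw [hb, map_smul, equiv_apply, Equiv.refl_apply, unitsSMul_apply, Units.smul_def, smul_smul]
    rfl
  refine ⟨f, fun i => ⟨(u i)⁻¹ * v i, by simpa [u, v] using hf i⟩, ?_⟩
  conv_lhs => rw [← b.sum_repr x]
  conv_rhs => rw [← c.sum_repr y]
  rw [map_sum]
  refine Finset.sum_congr rfl fun i _ => ?_
  rw [map_smul, hf, smul_smul, mul_inv_cancel_left₀ (hx i)]

theorem eq_smul_of_apply_eq_smul (b : Basis ι K V) {x : V} (hx : ∀ i, b.repr x i ≠ 0)
    {f g : V →ₗ[K] W} (hf : Function.Injective f) (hb : ∀ i, ∃ t : K, g (b i) = t • f (b i))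
    {s : K} (hs : g x = s • f x) : g = s • f := by
  choose t ht using hb
  have hsum : ∑ i, (b.repr x i * t i) • b i = s • x := hf <| calc
    f (∑ i, (b.repr x i * t i) • b i) = g (∑ i, b.repr x i • b i) := by
      simp only [map_sum, map_smul, ht, smul_smul]
    _ = f (s • x) := by rw [b.sum_repr, hs, map_smul]
  have hts : ∀ i, t i = s := fun i => by
    have := DFunLike.congr_fun (congrArg b.repr hsum) i
    rw [b.repr_sum_self, map_smul, Finsupp.smul_apply, smul_eq_mul,
      mul_comm (b.repr x i)] at this
    exact mul_right_cancel₀ (hx i) this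
  exact b.ext fun i => by rw [ht, hts]; rfl

end Module.Basis

namespace Matrix

variable {K ι m n : Type*} [Field K] [Fintype n]

def ProjectivelyMaps (A : Matrix m n K) (p : ι → n → K) (q : ι → m → K) : Prop :=
  ∀ i, ∃ c : Kˣ, A *ᵥ p i = (c : K) • q i

variable {A B : Matrix m n K} {p : ι → n → K} {q : ι → m → K}

theorem ProjectivelyMaps.smul (hA : A.ProjectivelyMaps p q) (c : Kˣ) :
    ((c : K) • A).ProjectivelyMaps p q := fun i => by
  obtain ⟨d, hd⟩ := hA i
  exact ⟨c * d, by rw [smul_mulVec, hd, smul_smul, Units.val_mul]⟩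

theorem ProjectivelyMaps.exists_mulVec_eq_smul (hA : A.ProjectivelyMaps p q)
    (hB : B.ProjectivelyMaps p q) (i : ι) : ∃ t : K, B *ᵥ p i = t • A *ᵥ p i := by
  obtain ⟨a, ha⟩ := hA i
  obtain ⟨b, hb⟩ := hB i
  exact ⟨b / a, by rw [ha, hb, smul_smul, div_mul_cancel₀ _ a.ne_zero]⟩

theorem ProjectivelyMaps.map {F : Type*} [EquivLike F K K] [RingEquivClass F K K] (g : F)
    (σ : Equiv.Perm ι) (hp : ∀ i, ∃ c : Kˣ, (fun j => g (p i j)) = (c : K) • p (σ i))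
    (hq : ∀ i, ∃ c : Kˣ, (fun j => g (q i j)) = (c : K) • q (σ i))
    (hA : A.ProjectivelyMaps p q) : (A.map g).ProjectivelyMaps p q := by
  intro j
  obtain ⟨i, rfl⟩ := σ.surjective j
  obtain ⟨a, ha⟩ := hp i
  obtain ⟨b, hb⟩ := hq i
  obtain ⟨d, hd⟩ := hA i
  have hmap : A.map g *ᵥ (fun j => g (p i j)) = fun j => g ((A *ᵥ p i) j) := by
    funext j
    simp [mulVec, dotProduct, map_sum]
  refine ⟨a⁻¹ * Units.mk0 (g d) ((map_ne_zero g).mpr d.ne_zero) * b, ?_⟩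
  rw [ha, hd, mulVec_smul] at hmap
  have hscaled : (a : K) • (A.map g *ᵥ p (σ i)) = (g d * b) • q (σ i) := by
    rw [hmap, ← smul_smul, ← hb]
    funext j
    simp
  rw [Units.val_mul, Units.val_mul, Units.val_inv_eq_inv_val, Units.val_mk0, mul_assoc,
    ← smul_smul, ← hscaled, inv_smul_smul₀ a.ne_zero]

end Matrix

theorem Matrix.exists_map_algebraMap_eq_smul {k L m n : Type*} [Field k] [Field L]
    [Algebra k L] [IsGalois k L] {A : Matrix m n L} (hA : A ≠ 0)
    (h : ∀ g : L ≃ₐ[k] L, ∃ e : L, A.map g = e • A) :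
    ∃ (c : Lˣ) (B : Matrix m n k), B.map (algebraMap k L) = (c : L) • A := by
  obtain ⟨r, s, hrs⟩ : ∃ r s, A r s ≠ 0 := by
    by_contra! h0
    exact hA (Matrix.ext h0)
  have hfixed : ∀ i j, (A r s)⁻¹ * A i j ∈ Set.range (algebraMap k L) := fun i j => by
    refine (InfiniteGalois.mem_range_algebraMap_iff_fixed _).mpr fun g => ?_
    obtain ⟨e, he⟩ := h g
    have hg : ∀ i j, g (A i j) = e * A i j := fun i j => by
      simpa using congrFun₂ he i j
    have he0 : e ≠ 0 := by
      rintro rfl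
      simpa [hrs] using hg r s
    rw [map_mul, map_inv₀, hg, hg, mul_inv, mul_mul_mul_comm, inv_mul_cancel₀ he0, one_mul]
  choose B hB using hfixed
  exact ⟨Units.mk0 _ (inv_ne_zero hrs), Matrix.of B, Matrix.ext fun i j => hB i j⟩

def NoThreeCollinear {K : Type*} [Field K] (p : Fin 4 → Fin 3 → K) : Prop :=
  ∀ i j l : Fin 4, i ≠ j → j ≠ l → i ≠ l → LinearIndependent K ![p i, p j, p l]

namespace NoThreeCollinear

variable {K : Type*} [Field K] {p q : Fin 4 → Fin 3 → K}

noncomputable def basis (hp : NoThreeCollinear p) : Module.Basis (Fin 3) K (Fin 3 → K) :=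
  basisOfLinearIndependentOfCardEqFinrank (hp 0 1 2 (by decide) (by decide) (by decide))
    (by simp)

theorem basis_apply (hp : NoThreeCollinear p) (i : Fin 3) : hp.basis i = p i.castSucc := by
  fin_cases i <;> simp [basis]

theorem repr_basis_ne_zero (hp : NoThreeCollinear p) (i : Fin 3) :
    hp.basis.repr (p 3) i ≠ 0 := by
  refine hp.basis.repr_ne_zero_of_linearIndependent_update ?_
  have hupdate :
      Function.update hp.basis i (p 3) = Function.update (p ∘ Fin.castSucc) i (p 3) := by
    congr 1
    exact funext hp.basis_apply
  rw [hupdate]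
  fin_cases i
  · have h : Function.update (p ∘ Fin.castSucc) 0 (p 3) = ![p 3, p 1, p 2] := by
      funext j; fin_cases j <;> rfl
    exact h ▸ hp 3 1 2 (by decide) (by decide) (by decide)
  · have h : Function.update (p ∘ Fin.castSucc) 1 (p 3) = ![p 0, p 3, p 2] := by
      funext j; fin_cases j <;> rfl
    exact h ▸ hp 0 3 2 (by decide) (by decide) (by decide)
  · have h : Function.update (p ∘ Fin.castSucc) 2 (p 3) = ![p 0, p 1, p 3] := by
      funext j; fin_cases j <;> rfl
    exact h ▸ hp 0 1 3 (by decide) (by decide) (by decide)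

theorem exists_projectivelyMaps (hp : NoThreeCollinear p) (hq : NoThreeCollinear q) :
    ∃ A : Matrix (Fin 3) (Fin 3) K, IsUnit A.det ∧ A.ProjectivelyMaps p q := by
  obtain ⟨f, hfb, hfx⟩ := hp.basis.exists_linearEquiv_apply_eq_smul_of_repr_ne_zero hq.basis
    hp.repr_basis_ne_zero hq.repr_basis_ne_zero
  refine ⟨LinearMap.toMatrix' f.toLinearMap, ?_, fun i => ?_⟩
  · rw [LinearMap.det_toMatrix']
    exact f.isUnit_det'
  rw [LinearMap.toMatrix'_mulVec, LinearEquiv.coe_coe]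
  induction i using Fin.lastCases with
  | last => exact ⟨1, by simpa using hfx⟩
  | cast j =>
    obtain ⟨t, ht⟩ := hfb j
    exact ⟨t, by rwa [hp.basis_apply, hq.basis_apply] at ht⟩

theorem eq_smul_of_projectivelyMaps (hp : NoThreeCollinear p) {A B : Matrix (Fin 3) (Fin 3) K}
    (hA : IsUnit A.det) (hAp : A.ProjectivelyMaps p q) (hBp : B.ProjectivelyMaps p q) :
    ∃ e : K, B = e • A := by
  obtain ⟨s, hs⟩ := hAp.exists_mulVec_eq_smul hBp 3
  refine ⟨s, Matrix.toLin'.injective ?_⟩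
  rw [map_smul]
  refine hp.basis.eq_smul_of_apply_eq_smul hp.repr_basis_ne_zero ?_ (fun i => ?_) hs
  · exact Matrix.mulVec_injective_iff_isUnit.mpr ((Matrix.isUnit_iff_isUnit_det A).mpr hA)
  · rw [hp.basis_apply]
    exact hAp.exists_mulVec_eq_smul hBp i.castSucc

end NoThreeCollinear

theorem stmt_12_general (k L : Type*) [Field k] [Field L] [Algebra k L]
    [IsGalois k L]
    (p q : Fin 4 → (Fin 3 → L))
    (hp3 : ∀ i j l : Fin 4, i ≠ j → j ≠ l → i ≠ l → LinearIndependent L ![p i, p j, p l])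
    (hq3 : ∀ i j l : Fin 4, i ≠ j → j ≠ l → i ≠ l → LinearIndependent L ![q i, q j, q l])
    (hgal : ∀ g : L ≃ₐ[k] L, ∃ σ : Equiv.Perm (Fin 4),
      (∀ i, ∃ c : Lˣ, (fun m => g (p i m)) = (c : L) • p (σ i)) ∧
      (∀ i, ∃ c : Lˣ, (fun m => g (q i m)) = (c : L) • q (σ i))) :
    ∃ A : Matrix (Fin 3) (Fin 3) k, IsUnit A.det ∧
      ∀ i, ∃ c : Lˣ, (A.map (algebraMap k L)).mulVec (p i) = (c : L) • q i := by
  obtain ⟨A, hA_det, hA⟩ := NoThreeCollinear.exists_projectivelyMaps hp3 hq3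
  have hA_galois : ∀ g : L ≃ₐ[k] L, ∃ e : L, A.map g = e • A := fun g => by
    obtain ⟨σ, hσp, hσq⟩ := hgal g
    exact NoThreeCollinear.eq_smul_of_projectivelyMaps hp3 hA_det hA (hA.map g σ hσp hσq)
  have hA0 : A ≠ 0 := by
    rintro rfl
    simp at hA_det
  obtain ⟨c, B, hB⟩ := Matrix.exists_map_algebraMap_eq_smul hA0 hA_galois
  refine ⟨B, ?_, hB ▸ hA.smul c⟩
  have hBL : IsUnit (algebraMap k L B.det) := by
    rw [RingHom.map_det, RingHom.mapMatrix_apply, hB, Matrix.det_smul]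
    exact (c.isUnit.pow _).mul hA_det
  exact hBL.of_map

/-- Points of `ℙ²(L)` are represented by nonzero vectors in `Fin 3 → L` up to scaling;
"no three collinear" means any three of the vectors are linearly independent.
If the Galois group of a finite Galois extension `L/k` permutes the projective points
`p₁,…,p₄` and `q₁,…,q₄` by the same permutation, then there is a matrix `A ∈ GL₃(k)`
(defining an element of `PGL₃(k)`) with `A·pᵢ = qᵢ` projectively for all `i`. -/
theorem stmt_12 (k L : Type*) [Field k] [Field L] [Algebra k L]
    [FiniteDimensional k L] [IsGalois k L]
    (p q : Fin 4 → (Fin 3 → L))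
    (hp3 : ∀ i j l : Fin 4, i ≠ j → j ≠ l → i ≠ l → LinearIndependent L ![p i, p j, p l])
    (hq3 : ∀ i j l : Fin 4, i ≠ j → j ≠ l → i ≠ l → LinearIndependent L ![q i, q j, q l])
    (hgal : ∀ g : L ≃ₐ[k] L, ∃ σ : Equiv.Perm (Fin 4),
      (∀ i, ∃ c : Lˣ, (fun m => g (p i m)) = (c : L) • p (σ i)) ∧
      (∀ i, ∃ c : Lˣ, (fun m => g (q i m)) = (c : L) • q (σ i))) :
    ∃ A : Matrix (Fin 3) (Fin 3) k, IsUnit A.det ∧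
      ∀ i, ∃ c : Lˣ, (A.map (algebraMap k L)).mulVec (p i) = (c : L) • q i :=
  stmt_12_general k L p q hp3 hq3 hgal
end
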